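/- Let θ₀, θ_R, θ₀', θ_R', δ₀, δ_R, δ₀', δ_R' ∈ S_{2π} with δ₀' − δ₀ ≠ 0 mod π and δ_R' − δ_R ≠ 0 mod π, and let z ∈ ℂ \ (σ(H_{θ₀,θ_R}) ∪ σ(H_{δ₀,δ_R})). Then the linear fractional transformation Λ_{θ₀,θ_R}^{θ₀',θ_R'}(z) = (S_{δ₀'−δ₀, δ_R'−δ_R})⁻¹ · [S_{δ₀'−θ₀', δ_R'−θ_R'} + S_{θ₀'−δ₀, θ_R'−δ_R}·Λ_{δ₀,δ_R}^{δ₀',δ_R'}(z)] · [S_{δ₀'−θ₀, δ_R'−θ_R} + S_{θ₀−δ₀, θ_R−δ_R}·Λ_{δ₀,δ_R}^{δ₀',δ_R'}(z)]⁻¹ · S_{δ₀'−δ₀, δ_R'−δ_R} holds (in particular, the inverted matrix is invertible). -/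

import Mathlib

open MeasureTheory Set Complex Filter Matrix
open scoped Classical

noncomputable section

/-- The strip `S_{2π} = {z ∈ ℂ | 0 ≤ Re z < 2π}`. -/
def S2pi : Set ℂ := {z : ℂ | 0 ≤ z.re ∧ z.re < 2 * Real.pi}

/-- `u` (with derivative `u'`) solves the inhomogeneous Schrödinger equation
`-u'' + V u - z u = f` on `[0,R]`: `u` is differentiable with derivative `u'`
on `[0,R]`, and `u'` is absolutely continuous with `u'' = (V - z) u - f` (a.e.),
encoded in integrated form. -/
def IsSolInhom (R : ℝ) (V : ℝ → ℂ) (z : ℂ) (f u u' : ℝ → ℂ) : Prop :=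
  (∀ x ∈ Icc (0:ℝ) R, HasDerivAt u (u' x) x) ∧
  (∀ x ∈ Icc (0:ℝ) R, u' x = u' 0 + ∫ t in (0:ℝ)..x, ((V t - z) * u t - f t))

/-- `u` (with derivative `u'`) solves the homogeneous equation `-u'' + V u = z u`
on `[0,R]`. -/
def IsSol (R : ℝ) (V : ℝ → ℂ) (z : ℂ) (u u' : ℝ → ℂ) : Prop :=
  IsSolInhom R V z 0 u u'

/-- The boundary trace map `γ_{θ₀,θ_R}(u) ∈ ℂ²`. -/
def bTrace (R : ℝ) (θ0 θR : ℂ) (u u' : ℝ → ℂ) : Fin 2 → ℂ :=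
  ![Complex.cos θ0 * u 0 + Complex.sin θ0 * u' 0,
    Complex.cos θR * u R - Complex.sin θR * u' R]

/-- `z` is an eigenvalue of the Schrödinger operator `H_{θ₀,θ_R}` in `L²((0,R))`.
Since `H_{θ₀,θ_R}` has purely discrete spectrum, the spectrum `σ(H_{θ₀,θ_R})`
coincides with the set of its eigenvalues. -/
def IsEigenvalue (R : ℝ) (V : ℝ → ℂ) (θ0 θR z : ℂ) : Prop :=
  ∃ u u' : ℝ → ℂ, IsSol R V z u u' ∧ bTrace R θ0 θR u u' = 0 ∧
    ∃ x ∈ Icc (0:ℝ) R, u x ≠ 0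

/-- The boundary data map `Λ_{θ₀,θ_R}^{θ₀',θ_R'}(z) : ℂ² → ℂ²`: it sends the
`(θ₀,θ_R)`-boundary data of a solution of `-u'' + V u = z u` to its
`(θ₀',θ_R')`-boundary data.  (It is defined via a choice of solution; for
`z ∉ σ(H_{θ₀,θ_R})` the solution exists and is unique, so the map is well
defined there.) -/
def lambdaMap (R : ℝ) (V : ℝ → ℂ) (θ0 θR θ0' θR' z : ℂ) (c : Fin 2 → ℂ) :
    Fin 2 → ℂ :=
  if h : ∃ u : (ℝ → ℂ) × (ℝ → ℂ), IsSol R V z u.1 u.2 ∧ bTrace R θ0 θR u.1 u.2 = c then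
    bTrace R θ0' θR' h.choose.1 h.choose.2
  else 0

/-- The boundary data map `Λ_{θ₀,θ_R}^{θ₀',θ_R'}(z)` as a `2 × 2` complex matrix. -/
def lambdaMat (R : ℝ) (V : ℝ → ℂ) (θ0 θR θ0' θR' z : ℂ) :
    Matrix (Fin 2) (Fin 2) ℂ :=
  Matrix.of fun i j => lambdaMap R V θ0 θR θ0' θR' z (Pi.single j 1) i

/-- The diagonal matrix `S_{α,β} = diag(sin α, sin β)`. -/
def Smat (α β : ℂ) : Matrix (Fin 2) (Fin 2) ℂ :=
  Matrix.diagonal ![Complex.sin α, Complex.sin β]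

end

/-- `w ≠ 0 mod π`, i.e. `w` is not an integer multiple of `π`. -/
def NeZeroModPi (w : ℂ) : Prop := ∀ k : ℤ, w ≠ (k : ℂ) * (Real.pi : ℂ)

/-! Fix solutions `U₀, U₁` of `-u'' + V u = z u` with Cauchy data `(1, 0)` and `(0, 1)` at `0`,
and let `M_η` be the matrix whose columns are their `η`-traces. If `z ∉ σ(H_η)`, a solution with
vanishing `η`-trace is zero, so `M_η` is invertible and `Λ_η^{η'}(z) = M_{η'} M_η⁻¹`. The addition
formula for `sin` gives `S_{δ'-θ} M_δ + S_{θ-δ} M_{δ'} = S_{δ'-δ} M_θ`, from which the linear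
fractional formula is pure matrix algebra.

The solutions exist although `V` is merely integrable: the Picard operator of the first-order
system `(u, u')' = (u', (V - z) u)` has an `n`-th iterate that is Lipschitz with constant
`(∫ ‖A‖)ⁿ / n!`, hence a contracting iterate. -/

theorem integral_mul_primitive_pow {k : ℝ → ℝ} {a b : ℝ} (hk : IntervalIntegrable k volume a b)
    (n : ℕ) :
    ∫ t in a..b, k t * (∫ s in a..t, k s) ^ n = (∫ s in a..b, k s) ^ (n + 1) / (n + 1) := by
  set m : ℝ → ℝ := fun x => ∫ s in a..x, k s
  have hm : AbsolutelyContinuousOnInterval m a b :=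
    hk.absolutelyContinuousOnInterval_intervalIntegral left_mem_uIcc
  have hpow : ∀ j : ℕ, AbsolutelyContinuousOnInterval (fun x => m x ^ (j + 1)) a b := by
    intro j
    induction j with
    | zero => simpa using hm
    | succ j ih => simpa only [pow_succ] using ih.fun_mul hm
  have hderiv : ∀ᵐ t, t ∈ uIoc a b →
      (n + 1 : ℝ) * (k t * m t ^ n) = deriv (fun x => m x ^ (n + 1)) t := by
    filter_upwards [hk.ae_hasDerivAt_integral] with t ht hmem
    rw [((ht (uIoc_subset_uIcc hmem) a left_mem_uIcc).fun_pow (n + 1)).deriv]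
    push_cast
    ring
  have hFTC := (hpow n).integral_deriv_eq_sub
  rw [← intervalIntegral.integral_congr_ae hderiv, intervalIntegral.integral_const_mul] at hFTC
  rw [eq_div_iff (by positivity), mul_comm, hFTC]
  simp [m]

variable {E : Type*} [NormedAddCommGroup E] [NormedSpace ℝ E]

theorem IntervalIntegrable.clm_apply_continuousOn {A : ℝ → E →L[ℝ] E} {y : ℝ → E} {a b : ℝ}
    (hA : IntervalIntegrable A volume a b) (hy : ContinuousOn y (uIcc a b)) :
    IntervalIntegrable (fun t => A t (y t)) volume a b := by
  obtain ⟨C, hC⟩ := isCompact_uIcc.exists_bound_of_continuousOn hy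
  rw [intervalIntegrable_iff] at hA ⊢
  refine (hA.norm.mul_const C).mono' ?_ ?_
  · exact (ContinuousLinearMap.id ℝ (E →L[ℝ] E)).aestronglyMeasurable_comp₂ hA.1
      ((hy.mono uIoc_subset_uIcc).aestronglyMeasurable measurableSet_uIoc)
  · refine (ae_restrict_iff' measurableSet_uIoc).2 (Eventually.of_forall fun t ht => ?_)
    exact (A t).le_opNorm_of_le (hC t (uIoc_subset_uIcc ht))

section Picard

open scoped Nat

variable {A : ℝ → E →L[ℝ] E} {a b : ℝ}

noncomputable def picardOp (hab : a ≤ b) (hA : IntervalIntegrable A volume a b) (y₀ : E)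
    (y : C(Icc a b, E)) : C(Icc a b, E) where
  toFun x := y₀ + ∫ t in a..x, A t (IccExtend hab y t)
  continuous_toFun := by
    have hint : IntervalIntegrable (fun t => A t (IccExtend hab y t)) volume a b :=
      hA.clm_apply_continuousOn y.continuous.Icc_extend'.continuousOn
    refine continuous_const.add ((intervalIntegral.continuousOn_primitive_interval' hint
      left_mem_uIcc).comp_continuous continuous_subtype_val fun x => ?_)
    rw [uIcc_of_le hab]
    exact x.2

variable {hab : a ≤ b} {hA : IntervalIntegrable A volume a b} {y₀ : E}

theorem norm_picardOp_sub_le (y z : C(Icc a b, E)) (x : Icc a b) {B : ℝ → ℝ}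
    (hB : ContinuousOn B (Icc a b)) (hyz : ∀ t : Icc a b, ‖y t - z t‖ ≤ B t) :
    ‖picardOp hab hA y₀ y x - picardOp hab hA y₀ z x‖ ≤ ∫ t in a..x, ‖A t‖ * B t := by
  have hsub : uIcc a x ⊆ Icc a b := by rw [uIcc_of_le x.2.1]; exact Icc_subset_Icc_right x.2.2
  have hAx : IntervalIntegrable A volume a x := hA.mono_set (by rwa [uIcc_of_le hab])
  have hint : ∀ w : C(Icc a b, E),
      IntervalIntegrable (fun t => A t (IccExtend hab w t)) volume a x :=
    fun w => hAx.clm_apply_continuousOn w.continuous.Icc_extend'.continuousOn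
  simp only [picardOp, ContinuousMap.coe_mk, add_sub_add_left_eq_sub]
  rw [← intervalIntegral.integral_sub (hint y) (hint z)]
  refine intervalIntegral.norm_integral_le_of_norm_le x.2.1 (Eventually.of_forall fun t ht => ?_)
    (hAx.norm.mul_continuousOn (hB.mono hsub))
  have htI : t ∈ Icc a b := ⟨ht.1.le, ht.2.trans x.2.2⟩
  rw [← map_sub, IccExtend_of_mem hab y htI, IccExtend_of_mem hab z htI]
  exact (A t).le_opNorm_of_le (hyz ⟨t, htI⟩)

theorem norm_iterate_picardOp_sub_le (n : ℕ) (y z : C(Icc a b, E)) (x : Icc a b) :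
    ‖(picardOp hab hA y₀)^[n] y x - (picardOp hab hA y₀)^[n] z x‖ ≤
      (∫ t in a..x, ‖A t‖) ^ n / n ! * ‖y - z‖ := by
  induction n generalizing x with
  | zero => simpa using (y - z).norm_coe_le_norm x
  | succ n ih =>
    have hm : ContinuousOn (fun x => ∫ t in a..x, ‖A t‖) (Icc a b) := by
      simpa [uIcc_of_le hab] using
        intervalIntegral.continuousOn_primitive_interval' hA.norm left_mem_uIcc
    have hAx : IntervalIntegrable (fun t => ‖A t‖) volume a x :=
      hA.norm.mono_set (by rw [uIcc_of_le hab, uIcc_of_le x.2.1]; exact Icc_subset_Icc_right x.2.2)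
    rw [Function.iterate_succ_apply', Function.iterate_succ_apply']
    refine (norm_picardOp_sub_le _ _ x ((hm.pow n).div_const _ |>.mul_const _)
      fun t => ih t).trans_eq ?_
    have hintegrand : (fun t => ‖A t‖ * ((∫ s in a..t, ‖A s‖) ^ n / n ! * ‖y - z‖)) =
        fun t => ‖A t‖ * (∫ s in a..t, ‖A s‖) ^ n * (‖y - z‖ / n !) := by
      ext t
      ring
    simp only [Pi.pow_apply]
    rw [hintegrand, intervalIntegral.integral_mul_const, integral_mul_primitive_pow hAx,
      Nat.factorial_succ]
    push_cast
    field_simp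

theorem exists_contractingWith_iterate_picardOp :
    ∃ (n : ℕ) (K : NNReal), ContractingWith K (picardOp hab hA y₀)^[n] := by
  set m := ∫ t in a..b, ‖A t‖
  obtain ⟨n, hn⟩ := (FloorSemiring.tendsto_pow_div_factorial_atTop m).eventually
    (gt_mem_nhds zero_lt_one) |>.exists
  have hm0 : 0 ≤ m := intervalIntegral.integral_nonneg hab fun t _ => norm_nonneg _
  refine ⟨n, ⟨m ^ n / n !, by positivity⟩, hn, LipschitzWith.of_dist_le_mul fun y z => ?_⟩
  rw [dist_eq_norm, dist_eq_norm]
  change _ ≤ m ^ n / n ! * _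
  refine (ContinuousMap.norm_le _ (by positivity)).2 fun x => ?_
  refine (norm_iterate_picardOp_sub_le n y z x).trans ?_
  gcongr
  · exact intervalIntegral.integral_nonneg x.2.1 fun t _ => norm_nonneg _
  · exact intervalIntegral.integral_mono_interval le_rfl x.2.1 x.2.2
      (Eventually.of_forall fun t => norm_nonneg _) hA.norm

end Picard

open scoped Nat in
theorem exists_continuous_eq_add_integral_apply [CompleteSpace E] {A : ℝ → E →L[ℝ] E} {a b : ℝ}
    (hab : a ≤ b) (hA : IntervalIntegrable A volume a b) (y₀ : E) :
    ∃ y : ℝ → E, Continuous y ∧ ∀ x ∈ Icc a b, y x = y₀ + ∫ t in a..x, A t (y t) := by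
  obtain ⟨n, K, hK⟩ := exists_contractingWith_iterate_picardOp (hab := hab) (hA := hA) (y₀ := y₀)
  refine ⟨IccExtend hab (hK.fixedPoint _), (hK.fixedPoint _).continuous.Icc_extend', fun x hx => ?_⟩
  conv_lhs => rw [IccExtend_of_mem hab _ hx, ← hK.isFixedPt_fixedPoint_iterate]
  rfl

theorem mul_inv_eq_linearFractional {n K : Type*} [Fintype n] [DecidableEq n] [CommRing K]
    {S S₁ T₁ S₂ T₂ P P' Q Q' : Matrix n n K} (hS : IsUnit S) (hP : IsUnit P) (hQ : IsUnit Q)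
    (h₁ : S₁ * P + T₁ * P' = S * Q) (h₂ : S₂ * P + T₂ * P' = S * Q') :
    IsUnit (S₁ + T₁ * (P' * P⁻¹)) ∧
      Q' * Q⁻¹ = S⁻¹ * (S₂ + T₂ * (P' * P⁻¹)) * (S₁ + T₁ * (P' * P⁻¹))⁻¹ * S := by
  have hS' := (isUnit_iff_isUnit_det S).1 hS
  have hP' := (isUnit_iff_isUnit_det P).1 hP
  have key : ∀ {A B C : Matrix n n K},
      A * P + B * P' = S * C → A + B * (P' * P⁻¹) = S * C * P⁻¹ := by
    intro A B C h
    rw [← h, Matrix.add_mul, Matrix.mul_assoc A, mul_nonsing_inv _ hP', Matrix.mul_one,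
      Matrix.mul_assoc]
  rw [key h₁, key h₂]
  refine ⟨(hS.mul hQ).mul (isUnit_nonsing_inv_iff.2 hP), ?_⟩
  rw [Matrix.mul_inv_rev, Matrix.mul_inv_rev, nonsing_inv_nonsing_inv _ hP']
  simp only [Matrix.mul_assoc]
  rw [nonsing_inv_mul_cancel_left _ _ hS', nonsing_inv_mul _ hS', Matrix.mul_one,
    nonsing_inv_mul_cancel_left _ _ hP']

noncomputable def companionCLM (w : ℂ) : (ℂ × ℂ) →L[ℝ] (ℂ × ℂ) :=
  (ContinuousLinearMap.inl ℝ ℂ ℂ).comp (ContinuousLinearMap.snd ℝ ℂ ℂ) +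
    w • (ContinuousLinearMap.inr ℝ ℂ ℂ).comp (ContinuousLinearMap.fst ℝ ℂ ℂ)

@[simp]
theorem companionCLM_apply (w : ℂ) (p : ℂ × ℂ) : companionCLM w p = (p.2, w * p.1) := by
  simp [companionCLM]

theorem components_of_eq_add_integral_companionCLM {W : ℝ → ℂ} {y : ℝ → ℂ × ℂ} {y₀ : ℂ × ℂ}
    {a x : ℝ} (hW : IntervalIntegrable W volume a x) (hy : Continuous y)
    (hyx : y x = y₀ + ∫ t in a..x, companionCLM (W t) (y t)) :
    (y x).1 = y₀.1 + ∫ t in a..x, (y t).2 ∧ (y x).2 = y₀.2 + ∫ t in a..x, W t * (y t).1 := by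
  have hA : IntervalIntegrable (fun t => companionCLM (W t)) volume a x :=
    intervalIntegrable_const.add ⟨hW.1.smul_const _, hW.2.smul_const _⟩
  have hint := hA.clm_apply_continuousOn hy.continuousOn
  have h1 := (ContinuousLinearMap.fst ℝ ℂ ℂ).intervalIntegral_comp_comm hint
  have h2 := (ContinuousLinearMap.snd ℝ ℂ ℂ).intervalIntegral_comp_comm hint
  simp only [ContinuousLinearMap.coe_fst', ContinuousLinearMap.coe_snd', companionCLM_apply]
    at h1 h2
  simp only [hyx, Prod.fst_add, Prod.snd_add, companionCLM_apply, ← h1, ← h2, and_self]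

theorem isSol_of_forall_eq_add_integral {R a b : ℝ} (ha : a < 0) (hb : R < b) {V W : ℝ → ℂ}
    {z : ℂ} (hW : IntervalIntegrable W volume a b) (hWV : ∀ t ∈ Ioc 0 R, W t = V t - z)
    {y : ℝ → ℂ × ℂ} (hy : Continuous y) {y₀ : ℂ × ℂ}
    (hyeq : ∀ x ∈ Icc a b, (y x).1 = y₀.1 + ∫ t in a..x, (y t).2 ∧
      (y x).2 = y₀.2 + ∫ t in a..x, W t * (y t).1) :
    IsSol R V z (fun x => (y x).1) (fun x => (y x).2) := by
  have hmem : ∀ x ∈ Icc 0 R, x ∈ Icc a b := fun x hx => ⟨by linarith [hx.1], by linarith [hx.2]⟩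
  have hWy : ∀ s ∈ Icc a b, IntervalIntegrable (fun r => W r * (y r).1) volume a s := by
    intro s hs
    refine (hW.mono_set ?_).mul_continuousOn hy.fst.continuousOn
    rw [uIcc_of_le hs.1, uIcc_of_le (hs.1.trans hs.2)]
    exact Icc_subset_Icc_right hs.2
  refine ⟨fun x hx => ?_, fun x hx => ?_⟩
  · have hnhds : Ioo a b ∈ nhds x := Ioo_mem_nhds (by linarith [hx.1]) (by linarith [hx.2])
    refine ((hy.snd.integral_hasStrictDerivAt a x).hasDerivAt.const_add
      y₀.1).congr_of_eventuallyEq ?_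
    filter_upwards [hnhds] with w hw using (hyeq w (Ioo_subset_Icc_self hw)).1
  · have h0 : (0 : ℝ) ∈ Icc 0 R := ⟨le_rfl, hx.1.trans hx.2⟩
    dsimp only
    rw [(hyeq x (hmem x hx)).2, (hyeq 0 (hmem 0 h0)).2, add_assoc,
      ← intervalIntegral.integral_add_adjacent_intervals (hWy 0 (hmem 0 h0))
        ((hWy 0 (hmem 0 h0)).symm.trans (hWy x (hmem x hx)))]
    refine congrArg _ (congrArg _ (intervalIntegral.integral_congr_ae
      (Eventually.of_forall fun t ht => ?_)))
    rw [uIoc_of_le hx.1] at ht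
    rw [hWV t ⟨ht.1, ht.2.trans hx.2⟩, Pi.zero_apply, sub_zero]

theorem exists_isSol {R : ℝ} (hR : 0 ≤ R) {V : ℝ → ℂ} (hV : IntegrableOn V (Ioo 0 R))
    (z c₀ c₁ : ℂ) : ∃ u u' : ℝ → ℂ, IsSol R V z u u' ∧ u 0 = c₀ ∧ u' 0 = c₁ := by
  set W : ℝ → ℂ := (Ioc 0 R).indicator fun t => V t - z
  have hW : Integrable W := by
    refine IntegrableOn.integrable_indicator ?_ measurableSet_Ioc
    exact (hV.congr_set_ae Ioo_ae_eq_Ioc.symm).sub (integrableOn_const measure_Ioc_lt_top.ne)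
  have hW_nonpos : ∀ t ≤ 0, W t = 0 := fun t ht =>
    indicator_of_notMem (fun h => by linarith [h.1]) _
  -- Starting at `-1` makes `u` differentiable at `0`; as `W = 0` on `[-1, 0]`, the data
  -- `(c₀ - c₁, c₁)` at `-1` become `(c₀, c₁)` at `0`.
  obtain ⟨y, hy, hyeq⟩ := exists_continuous_eq_add_integral_apply (A := fun t => companionCLM (W t))
    (show (-1 : ℝ) ≤ R + 1 by linarith)
    (intervalIntegrable_const.add (hW.smul_const _).intervalIntegrable) (c₀ - c₁, c₁)
  have hcomp : ∀ x ∈ Icc (-1 : ℝ) (R + 1), (y x).1 = c₀ - c₁ + ∫ t in (-1)..x, (y t).2 ∧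
      (y x).2 = c₁ + ∫ t in (-1)..x, W t * (y t).1 :=
    fun x hx => components_of_eq_add_integral_companionCLM hW.intervalIntegrable hy (hyeq x hx)
  have hsnd : ∀ x ∈ Icc (-1 : ℝ) 0, (y x).2 = c₁ := by
    intro x hx
    rw [(hcomp x ⟨hx.1, by linarith [hx.2]⟩).2, intervalIntegral.integral_zero_ae, add_zero]
    refine Eventually.of_forall fun t ht => ?_
    rw [uIoc_of_le hx.1] at ht
    rw [hW_nonpos t (ht.2.trans hx.2), zero_mul]
  have hfst : (y 0).1 = c₀ := by
    rw [(hcomp 0 ⟨by norm_num, by linarith⟩).1, intervalIntegral.integral_congr (g := fun _ => c₁)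
      fun t ht => hsnd t (by rwa [uIcc_of_le (by norm_num)] at ht)]
    simp
  refine ⟨fun x => (y x).1, fun x => (y x).2, ?_, hfst, hsnd 0 ⟨by norm_num, le_rfl⟩⟩
  exact isSol_of_forall_eq_add_integral (a := -1) (b := R + 1) (y₀ := (c₀ - c₁, c₁))
    (by norm_num) (by linarith) hW.intervalIntegrable (fun t ht => indicator_of_mem ht _) hy hcomp

section Solutions

variable {R : ℝ} {V : ℝ → ℂ} {z : ℂ} {u u' v v' : ℝ → ℂ}

theorem IsSol.continuousOn (h : IsSol R V z u u') : ContinuousOn u (Icc 0 R) :=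
  fun x hx => (h.1 x hx).continuousAt.continuousWithinAt

theorem IsSol.intervalIntegrable (hV : IntegrableOn V (Ioo 0 R)) (h : IsSol R V z u u') {x : ℝ}
    (hx : x ∈ Icc 0 R) : IntervalIntegrable (fun t => (V t - z) * u t) volume 0 x := by
  have hVz : IntervalIntegrable (fun t => V t - z) volume 0 x := by
    rw [intervalIntegrable_iff_integrableOn_Ioo_of_le hx.1]
    exact (hV.sub (integrableOn_const measure_Ioo_lt_top.ne)).mono_set
      (Ioo_subset_Ioo_right hx.2)
  refine hVz.mul_continuousOn (h.continuousOn.mono ?_)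
  rw [uIcc_of_le hx.1]
  exact Icc_subset_Icc_right hx.2

theorem IsSol.add (hV : IntegrableOn V (Ioo 0 R)) (hu : IsSol R V z u u') (hv : IsSol R V z v v') :
    IsSol R V z (u + v) (u' + v') := by
  refine ⟨fun x hx => (hu.1 x hx).add (hv.1 x hx), fun x hx => ?_⟩
  have hsum : ∫ t in (0 : ℝ)..x, ((V t - z) * (u + v) t - (0 : ℝ → ℂ) t) =
      (∫ t in (0 : ℝ)..x, ((V t - z) * u t - (0 : ℝ → ℂ) t)) +
        ∫ t in (0 : ℝ)..x, ((V t - z) * v t - (0 : ℝ → ℂ) t) := by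
    simp only [Pi.add_apply, Pi.zero_apply, sub_zero, mul_add]
    exact intervalIntegral.integral_add (hu.intervalIntegrable hV hx) (hv.intervalIntegrable hV hx)
  rw [Pi.add_apply, Pi.add_apply, hu.2 x hx, hv.2 x hx, hsum]
  ring

theorem IsSol.const_smul (c : ℂ) (h : IsSol R V z u u') : IsSol R V z (c • u) (c • u') := by
  refine ⟨fun x hx => (h.1 x hx).const_mul c, fun x hx => ?_⟩
  simp only [Pi.smul_apply, smul_eq_mul, Pi.zero_apply, sub_zero, h.2 x hx, mul_add,
    mul_left_comm _ c, intervalIntegral.integral_const_mul]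

theorem IsSol.sub (hV : IntegrableOn V (Ioo 0 R)) (hu : IsSol R V z u u') (hv : IsSol R V z v v') :
    IsSol R V z (u - v) (u' - v') := by
  simpa only [neg_one_smul, ← sub_eq_add_neg] using hu.add hV (hv.const_smul (-1))

theorem IsSol.sum_smul (hV : IntegrableOn V (Ioo 0 R)) {U U' : Fin 2 → ℝ → ℂ}
    (hU : ∀ j, IsSol R V z (U j) (U' j)) (c : Fin 2 → ℂ) :
    IsSol R V z (∑ j, c j • U j) (∑ j, c j • U' j) := by
  simpa only [Fin.sum_univ_two] using ((hU 0).const_smul (c 0)).add hV ((hU 1).const_smul (c 1))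

/-- `u ≡ 0` on `[0, R]` forces `u'` to be constant there, and `u'(R / 2) = 0`. -/
theorem IsSol.eq_zero_of_bTrace_eq_zero (hR : 0 < R) {η₀ η_R : ℂ}
    (hz : ¬ IsEigenvalue R V η₀ η_R z) (h : IsSol R V z u u') (htr : bTrace R η₀ η_R u u' = 0) :
    u 0 = 0 ∧ u' 0 = 0 ∧ u R = 0 ∧ u' R = 0 := by
  have hu : ∀ x ∈ Icc 0 R, u x = 0 := by
    by_contra! hne
    exact hz ⟨u, u', h, htr, hne⟩
  have hu' : ∀ x ∈ Icc 0 R, u' x = u' 0 := by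
    intro x hx
    rw [h.2 x hx, intervalIntegral.integral_congr (g := fun _ => 0) fun t ht => ?_,
      intervalIntegral.integral_zero, add_zero]
    rw [uIcc_of_le hx.1] at ht
    simp [hu t ⟨ht.1, ht.2.trans hx.2⟩]
  have hmid : R / 2 ∈ Ioo 0 R := ⟨by linarith, by linarith⟩
  have hu_nhds : u =ᶠ[nhds (R / 2)] fun _ => 0 :=
    Filter.mem_of_superset (Ioo_mem_nhds hmid.1 hmid.2) fun x hx => hu x (Ioo_subset_Icc_self hx)
  have hu'_mid : u' (R / 2) = 0 :=
    (h.1 _ (Ioo_subset_Icc_self hmid)).unique ((hasDerivAt_const _ 0).congr_of_eventuallyEq hu_nhds)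
  have h0 : u' 0 = 0 := (hu' _ (Ioo_subset_Icc_self hmid)).symm.trans hu'_mid
  exact ⟨hu 0 ⟨le_rfl, hR.le⟩, h0, hu R ⟨hR.le, le_rfl⟩, (hu' R ⟨hR.le, le_rfl⟩).trans h0⟩

end Solutions

theorem bTrace_sub (R : ℝ) (η₀ η_R : ℂ) (u u' v v' : ℝ → ℂ) :
    bTrace R η₀ η_R (u - v) (u' - v') = bTrace R η₀ η_R u u' - bTrace R η₀ η_R v v' := by
  ext i
  fin_cases i <;> simp [bTrace] <;> ring

noncomputable def traceMatrix (R : ℝ) (η₀ η_R : ℂ) (U U' : Fin 2 → ℝ → ℂ) :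
    Matrix (Fin 2) (Fin 2) ℂ :=
  Matrix.of fun i j => bTrace R η₀ η_R (U j) (U' j) i

theorem bTrace_sum_smul (R : ℝ) (η₀ η_R : ℂ) (U U' : Fin 2 → ℝ → ℂ) (c : Fin 2 → ℂ) :
    bTrace R η₀ η_R (∑ j, c j • U j) (∑ j, c j • U' j) = traceMatrix R η₀ η_R U U' *ᵥ c := by
  ext i
  fin_cases i <;> simp [bTrace, traceMatrix, mulVec, dotProduct, Fin.sum_univ_two] <;> ring

theorem Smat_mul_traceMatrix_add (R : ℝ) (U U' : Fin 2 → ℝ → ℂ) (θ₀ θ_R δ₀ δ_R δ₀' δ_R' : ℂ) :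
    Smat (δ₀' - θ₀) (δ_R' - θ_R) * traceMatrix R δ₀ δ_R U U' +
        Smat (θ₀ - δ₀) (θ_R - δ_R) * traceMatrix R δ₀' δ_R' U U' =
      Smat (δ₀' - δ₀) (δ_R' - δ_R) * traceMatrix R θ₀ θ_R U U' := by
  ext i j
  fin_cases i <;> simp [Smat, traceMatrix, bTrace, Complex.sin_sub] <;> ring

theorem NeZeroModPi.sin_ne_zero {w : ℂ} (hw : NeZeroModPi w) : Complex.sin w ≠ 0 := fun h =>
  let ⟨k, hk⟩ := Complex.sin_eq_zero_iff.1 h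
  hw k hk

theorem isUnit_Smat {α β : ℂ} (hα : NeZeroModPi α) (hβ : NeZeroModPi β) : IsUnit (Smat α β) := by
  rw [Smat, isUnit_diagonal, Pi.isUnit_iff]
  intro i
  fin_cases i <;> simp [hα.sin_ne_zero, hβ.sin_ne_zero]

section FundamentalSystem

variable {R : ℝ} {V : ℝ → ℂ} {z η₀ η_R : ℂ} {U U' : Fin 2 → ℝ → ℂ}

theorem lambdaMap_bTrace (hR : 0 < R) (hV : IntegrableOn V (Ioo 0 R))
    (hz : ¬ IsEigenvalue R V η₀ η_R z) {u u' : ℝ → ℂ} (h : IsSol R V z u u') (η₀' η_R' : ℂ) :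
    lambdaMap R V η₀ η_R η₀' η_R' z (bTrace R η₀ η_R u u') = bTrace R η₀' η_R' u u' := by
  have hex : ∃ p : (ℝ → ℂ) × (ℝ → ℂ),
      IsSol R V z p.1 p.2 ∧ bTrace R η₀ η_R p.1 p.2 = bTrace R η₀ η_R u u' := ⟨(u, u'), h, rfl⟩
  rw [lambdaMap, dif_pos hex]
  set p := hex.choose
  obtain ⟨hp, hp_tr⟩ : IsSol R V z p.1 p.2 ∧ bTrace R η₀ η_R p.1 p.2 = bTrace R η₀ η_R u u' :=
    hex.choose_spec
  obtain ⟨h0, h0', hR0, hR0'⟩ := (hp.sub hV h).eq_zero_of_bTrace_eq_zero hR hz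
    (by rw [bTrace_sub, hp_tr, sub_self])
  simp only [Pi.sub_apply, sub_eq_zero] at h0 h0' hR0 hR0'
  simp [bTrace, h0, h0', hR0, hR0']

theorem isUnit_traceMatrix (hR : 0 < R) (hV : IntegrableOn V (Ioo 0 R))
    (hU : ∀ j, IsSol R V z (U j) (U' j))
    (hU₀ : ∀ j, U j 0 = (Pi.single j 1 : Fin 2 → ℂ) 0 ∧ U' j 0 = (Pi.single j 1 : Fin 2 → ℂ) 1)
    (hz : ¬ IsEigenvalue R V η₀ η_R z) :
    IsUnit (traceMatrix R η₀ η_R U U') := by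
  rw [isUnit_iff_isUnit_det, isUnit_iff_ne_zero]
  intro hdet
  obtain ⟨c, hc, hMc⟩ := exists_mulVec_eq_zero_iff.2 hdet
  rw [← bTrace_sum_smul] at hMc
  obtain ⟨h0, h0', -, -⟩ := (IsSol.sum_smul hV hU c).eq_zero_of_bTrace_eq_zero hR hz hMc
  simp [Fin.sum_univ_two, hU₀] at h0 h0'
  exact hc (funext fun j => by fin_cases j <;> simp [h0, h0'])

theorem lambdaMat_eq_mul_inv (hR : 0 < R) (hV : IntegrableOn V (Ioo 0 R))
    (hU : ∀ j, IsSol R V z (U j) (U' j))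
    (hU₀ : ∀ j, U j 0 = (Pi.single j 1 : Fin 2 → ℂ) 0 ∧ U' j 0 = (Pi.single j 1 : Fin 2 → ℂ) 1)
    (hz : ¬ IsEigenvalue R V η₀ η_R z) (η₀' η_R' : ℂ) :
    lambdaMat R V η₀ η_R η₀' η_R' z =
      traceMatrix R η₀' η_R' U U' * (traceMatrix R η₀ η_R U U')⁻¹ := by
  have hM := (isUnit_iff_isUnit_det _).1 (isUnit_traceMatrix hR hV hU hU₀ hz)
  ext i j
  set c := (traceMatrix R η₀ η_R U U')⁻¹ *ᵥ Pi.single j 1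
  have hc : bTrace R η₀ η_R (∑ k, c k • U k) (∑ k, c k • U' k) = Pi.single j 1 := by
    rw [bTrace_sum_smul, mulVec_mulVec, mul_nonsing_inv _ hM, one_mulVec]
  have h := lambdaMap_bTrace hR hV hz (IsSol.sum_smul hV hU c) η₀' η_R'
  rw [hc, bTrace_sum_smul, mulVec_mulVec] at h
  simpa [lambdaMat] using congrFun h i

end FundamentalSystem

theorem lambda_linear_fractional_transformation_general
    (R : ℝ) (hR : 0 < R) (V : ℝ → ℂ) (hV : IntegrableOn V (Ioo 0 R))
    (θ0 θR θ0' θR' δ0 δR δ0' δR' : ℂ)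
    (hm0 : NeZeroModPi (δ0' - δ0)) (hmR : NeZeroModPi (δR' - δR))
    (z : ℂ) (hz : ¬ IsEigenvalue R V θ0 θR z) (hz' : ¬ IsEigenvalue R V δ0 δR z) :
    IsUnit (Smat (δ0' - θ0) (δR' - θR) +
        Smat (θ0 - δ0) (θR - δR) * lambdaMat R V δ0 δR δ0' δR' z) ∧
    lambdaMat R V θ0 θR θ0' θR' z =
      (Smat (δ0' - δ0) (δR' - δR))⁻¹ *
        (Smat (δ0' - θ0') (δR' - θR') +
          Smat (θ0' - δ0) (θR' - δR) * lambdaMat R V δ0 δR δ0' δR' z) *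
        (Smat (δ0' - θ0) (δR' - θR) +
          Smat (θ0 - δ0) (θR - δR) * lambdaMat R V δ0 δR δ0' δR' z)⁻¹ *
        Smat (δ0' - δ0) (δR' - δR) := by
  choose U U' hU using fun j : Fin 2 => exists_isSol hR.le hV z
    ((Pi.single j 1 : Fin 2 → ℂ) 0) ((Pi.single j 1 : Fin 2 → ℂ) 1)
  have hsol := fun j => (hU j).1
  have hU₀ := fun j => (hU j).2
  rw [lambdaMat_eq_mul_inv hR hV hsol hU₀ hz, lambdaMat_eq_mul_inv hR hV hsol hU₀ hz']
  exact mul_inv_eq_linearFractional (isUnit_Smat hm0 hmR) (isUnit_traceMatrix hR hV hsol hU₀ hz')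
    (isUnit_traceMatrix hR hV hsol hU₀ hz) (Smat_mul_traceMatrix_add R U U' θ0 θR δ0 δR δ0' δR')
    (Smat_mul_traceMatrix_add R U U' θ0' θR' δ0 δR δ0' δR')

/-- The linear fractional transformation relating two general
boundary data maps: for `δ₀' − δ₀ ≠ 0 mod π`, `δ_R' − δ_R ≠ 0 mod π` and
`z ∉ σ(H_{θ₀,θ_R}) ∪ σ(H_{δ₀,δ_R})`,
`Λ_{θ₀,θ_R}^{θ₀',θ_R'}(z) = (S_{δ₀'−δ₀,δ_R'−δ_R})⁻¹
  [S_{δ₀'−θ₀',δ_R'−θ_R'} + S_{θ₀'−δ₀,θ_R'−δ_R} Λ_{δ₀,δ_R}^{δ₀',δ_R'}(z)]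
  [S_{δ₀'−θ₀,δ_R'−θ_R} + S_{θ₀−δ₀,θ_R−δ_R} Λ_{δ₀,δ_R}^{δ₀',δ_R'}(z)]⁻¹
  S_{δ₀'−δ₀,δ_R'−δ_R}`, the inverted matrix being invertible. -/
theorem lambda_linear_fractional_transformation
    (R : ℝ) (hR : 0 < R) (V : ℝ → ℂ) (hV : IntegrableOn V (Ioo 0 R))
    (θ0 θR θ0' θR' δ0 δR δ0' δR' : ℂ)
    (hθ0 : θ0 ∈ S2pi) (hθR : θR ∈ S2pi) (hθ0' : θ0' ∈ S2pi) (hθR' : θR' ∈ S2pi)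
    (hδ0 : δ0 ∈ S2pi) (hδR : δR ∈ S2pi) (hδ0' : δ0' ∈ S2pi) (hδR' : δR' ∈ S2pi)
    (hm0 : NeZeroModPi (δ0' - δ0)) (hmR : NeZeroModPi (δR' - δR))
    (z : ℂ) (hz : ¬ IsEigenvalue R V θ0 θR z) (hz' : ¬ IsEigenvalue R V δ0 δR z) :
    IsUnit (Smat (δ0' - θ0) (δR' - θR) +
        Smat (θ0 - δ0) (θR - δR) * lambdaMat R V δ0 δR δ0' δR' z) ∧
    lambdaMat R V θ0 θR θ0' θR' z =
      (Smat (δ0' - δ0) (δR' - δR))⁻¹ *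
        (Smat (δ0' - θ0') (δR' - θR') +
          Smat (θ0' - δ0) (θR' - δR) * lambdaMat R V δ0 δR δ0' δR' z) *
        (Smat (δ0' - θ0) (δR' - θR) +
          Smat (θ0 - δ0) (θR - δR) * lambdaMat R V δ0 δR δ0' δR' z)⁻¹ *
        Smat (δ0' - δ0) (δR' - δR) :=
  lambda_linear_fractional_transformation_general R hR V hV θ0 θR θ0' θR' δ0 δR δ0' δR' hm0 hmR z hz
    hz'
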